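/- (Intermediate claim from Example 2.2 of the paper.) Let Q ⊆ ℝ² be the closed quadrilateral (convex hull) with vertices (1,1), (1,2), (3/2, 5/2) and (2,2). Every future-directed timelike curve in ℝ² whose image is contained in Q has Lorentzian length at most √2. -/

import Mathlib

/-!
For a unit future timelike vector `u`, the reverse Cauchy–Schwarz inequality bounds the
Lorentzian norm of every causal vector `v` by the Minkowski product `⟪u, v⟫`. Integrating along a
timelike curve, `L(γ) ≤ ⟪u, q⟫ - ⟪u, p⟫`, so `x ↦ ⟪u, x⟫` is a time function bounding lengths.
With `u = (√2/4, 3√2/4)` we get `⟪u, x⟫ = (√2/4)(3x₂ - x₁)`, and on the vertices of `Q`, hence on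
`Q`, the quantity `3x₂ - x₁` ranges over `[2, 6]`; so `L(γ) ≤ (√2/4) · 4 = √2`.
-/

open Set
open scoped ENNReal

/-- A vector of the Minkowski plane (first coordinate space, second coordinate time)
is future-directed timelike. -/
def FDTimelike (v : ℝ × ℝ) : Prop := |v.1| < v.2

/-- A future-directed timelike curve in `M ⊆ ℝ²` from `p` to `q`: a piecewise `C¹`
map `γ : [0,1] → M` all of whose one-sided derivatives are future-directed timelike. -/
def IsTimelikeCurveIn (M : Set (ℝ × ℝ)) (γ : ℝ → ℝ × ℝ) (p q : ℝ × ℝ) : Prop :=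
  γ 0 = p ∧ γ 1 = q ∧ (∀ s ∈ Set.Icc (0 : ℝ) 1, γ s ∈ M) ∧
  ∃ (m : ℕ) (t : ℕ → ℝ), 0 < m ∧ t 0 = 0 ∧ t m = 1 ∧ (∀ j < m, t j < t (j + 1)) ∧
    ∀ j < m,
      ContDiffOn ℝ 1 γ (Set.Icc (t j) (t (j + 1))) ∧
      ∀ s ∈ Set.Icc (t j) (t (j + 1)),
        FDTimelike (derivWithin γ (Set.Icc (t j) (t (j + 1))) s)

/-- The Lorentzian length of a curve in the Minkowski plane. -/
noncomputable def Llen (γ : ℝ → ℝ × ℝ) : ℝ :=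
  ∫ s in (0 : ℝ)..1, Real.sqrt ((deriv γ s).2 ^ 2 - (deriv γ s).1 ^ 2)

/-- The Lorentzian distance of `M ⊆ ℝ²`. -/
noncomputable def LorDist (M : Set (ℝ × ℝ)) (p q : ℝ × ℝ) : ℝ≥0∞ :=
  ⨆ (γ : ℝ → ℝ × ℝ) (_ : IsTimelikeCurveIn M γ p q), ENNReal.ofReal (Llen γ)


/-- The closed quadrilateral with vertices `(1,1)`, `(1,2)`, `(3/2, 5/2)`, `(2,2)`. -/
noncomputable def Qquad : Set (ℝ × ℝ) :=
  convexHull ℝ {((1 : ℝ), (1 : ℝ)), ((1 : ℝ), (2 : ℝ)),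
    ((3 / 2 : ℝ), (5 / 2 : ℝ)), ((2 : ℝ), (2 : ℝ))}

def minkowskiInner (u v : ℝ × ℝ) : ℝ := u.2 * v.2 - u.1 * v.1

noncomputable def lorentzNorm (v : ℝ × ℝ) : ℝ := Real.sqrt (v.2 ^ 2 - v.1 ^ 2)

theorem lorentzNorm_le_minkowskiInner {u v : ℝ × ℝ} (hu : minkowskiInner u u = 1)
    (hu₂ : 0 < u.2) (hv : |v.1| ≤ v.2) : lorentzNorm v ≤ minkowskiInner u v := by
  unfold minkowskiInner at *
  have hu₁ : |u.1| ≤ u.2 := abs_le_of_sq_le_sq (by nlinarith) hu₂.le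
  have hnonneg : 0 ≤ u.2 * v.2 - u.1 * v.1 := sub_nonneg.mpr <|
    calc u.1 * v.1 ≤ |u.1 * v.1| := le_abs_self _
      _ = |u.1| * |v.1| := abs_mul _ _
      _ ≤ u.2 * v.2 := mul_le_mul hu₁ hv (abs_nonneg _) hu₂.le
  -- Lagrange identity: `⟪u,v⟫² - ⟪u,u⟫⟪v,v⟫ = (u₂v₁ - u₁v₂)²`.
  refine Real.sqrt_le_iff.mpr ⟨hnonneg, ?_⟩
  nlinarith [sq_nonneg (u.2 * v.1 - u.1 * v.2)]

theorem eqOn_deriv_derivWithin_Icc (γ : ℝ → ℝ × ℝ) (a b : ℝ) :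
    EqOn (deriv γ) (derivWithin γ (Icc a b)) (Ioo a b) := fun _ hs =>
  (derivWithin_of_mem_nhds (Icc_mem_nhds hs.1 hs.2)).symm

theorem continuousOn_lorentzNorm_derivWithin {γ : ℝ → ℝ × ℝ} {a b : ℝ} (hab : a < b)
    (hγ : ContDiffOn ℝ 1 γ (Icc a b)) :
    ContinuousOn (fun s => lorentzNorm (derivWithin γ (Icc a b) s)) (Icc a b) := by
  have hd := hγ.continuousOn_derivWithin (uniqueDiffOn_Icc hab) le_rfl
  exact (((continuous_snd.comp_continuousOn hd).pow 2).sub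
    ((continuous_fst.comp_continuousOn hd).pow 2)).sqrt

theorem intervalIntegrable_lorentzNorm_deriv {γ : ℝ → ℝ × ℝ} {a b : ℝ} (hab : a < b)
    (hγ : ContDiffOn ℝ 1 γ (Icc a b)) :
    IntervalIntegrable (fun s => lorentzNorm (deriv γ s)) MeasureTheory.volume a b :=
  ((continuousOn_lorentzNorm_derivWithin hab hγ).intervalIntegrable_of_Icc hab.le).congr_uIoo
    fun _ hs => congrArg lorentzNorm
      (eqOn_deriv_derivWithin_Icc γ a b (uIoo_of_le hab.le ▸ hs)).symm

theorem integral_lorentzNorm_deriv_le {γ : ℝ → ℝ × ℝ} {a b : ℝ} {u : ℝ × ℝ} (hab : a < b)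
    (hγ : ContDiffOn ℝ 1 γ (Icc a b))
    (hcausal : ∀ s ∈ Icc a b,
      |(derivWithin γ (Icc a b) s).1| ≤ (derivWithin γ (Icc a b) s).2)
    (hu : minkowskiInner u u = 1) (hu₂ : 0 < u.2) :
    ∫ s in a..b, lorentzNorm (deriv γ s) ≤ minkowskiInner u (γ b) - minkowskiInner u (γ a) := by
  set I := Icc a b
  have hτ : ContDiffOn ℝ 1 (fun s => minkowskiInner u (γ s)) I :=
    (contDiffOn_const.mul (contDiff_snd.comp_contDiffOn hγ)).sub
      (contDiffOn_const.mul (contDiff_fst.comp_contDiffOn hγ))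
  have hderiv : ∀ s ∈ I,
      derivWithin (fun s => minkowskiInner u (γ s)) I s = minkowskiInner u (derivWithin γ I s) :=
    fun s hs => by
      have hγs := (hγ.differentiableOn one_ne_zero s hs).hasDerivWithinAt
      have h₁ : HasDerivWithinAt (fun r => (γ r).1) (derivWithin γ I s).1 I s :=
        (hasFDerivAt_fst (p := γ s)).comp_hasDerivWithinAt s hγs
      have h₂ : HasDerivWithinAt (fun r => (γ r).2) (derivWithin γ I s).2 I s :=
        (hasFDerivAt_snd (p := γ s)).comp_hasDerivWithinAt s hγs
      exact ((h₂.const_mul u.2).sub (h₁.const_mul u.1)).derivWithin (uniqueDiffOn_Icc hab s hs)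
  calc ∫ s in a..b, lorentzNorm (deriv γ s)
      = ∫ s in a..b, lorentzNorm (derivWithin γ I s) :=
        intervalIntegral.integral_congr_Ioo_of_le hab.le fun _ hs =>
          congrArg lorentzNorm (eqOn_deriv_derivWithin_Icc γ a b hs)
    _ ≤ ∫ s in a..b, derivWithin (fun s => minkowskiInner u (γ s)) I s := by
        refine intervalIntegral.integral_mono_on hab.le
          ((continuousOn_lorentzNorm_derivWithin hab hγ).intervalIntegrable_of_Icc hab.le)
          ((hτ.continuousOn_derivWithin (uniqueDiffOn_Icc hab) le_rfl).intervalIntegrable_of_Icc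
            hab.le) fun s hs => ?_
        rw [hderiv s hs]
        exact lorentzNorm_le_minkowskiInner hu hu₂ (hcausal s hs)
    _ = minkowskiInner u (γ b) - minkowskiInner u (γ a) :=
        intervalIntegral.integral_derivWithin_Icc_of_contDiffOn_Icc hτ hab.le

theorem Llen_le_minkowskiInner_sub {M : Set (ℝ × ℝ)} {γ : ℝ → ℝ × ℝ} {p q u : ℝ × ℝ}
    (h : IsTimelikeCurveIn M γ p q) (hu : minkowskiInner u u = 1) (hu₂ : 0 < u.2) :
    Llen γ ≤ minkowskiInner u q - minkowskiInner u p := by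
  obtain ⟨rfl, rfl, -, m, t, -, ht0, htm, hlt, hpiece⟩ := h
  have hsum : Llen γ = ∑ j ∈ Finset.range m, ∫ s in t j..t (j + 1), lorentzNorm (deriv γ s) := by
    rw [intervalIntegral.sum_integral_adjacent_intervals fun j hj =>
      intervalIntegrable_lorentzNorm_deriv (hlt j hj) (hpiece j hj).1, ht0, htm]
    rfl
  rw [hsum, ← ht0, ← htm, ← Finset.sum_range_sub fun j => minkowskiInner u (γ (t j))]
  exact Finset.sum_le_sum fun j hj =>
    have hj := Finset.mem_range.mp hj
    integral_lorentzNorm_deriv_le (hlt j hj) (hpiece j hj).1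
      (fun s hs => ((hpiece j hj).2 s hs).le) hu hu₂

theorem Qquad_subset_strip : Qquad ⊆ {x | 2 ≤ 3 * x.2 - x.1} ∩ {x | 3 * x.2 - x.1 ≤ 6} := by
  have hlin : IsLinearMap ℝ (fun x : ℝ × ℝ => 3 * x.2 - x.1) :=
    ⟨fun x y => by simp only [Prod.fst_add, Prod.snd_add]; ring,
      fun c x => by simp only [Prod.smul_fst, Prod.smul_snd, smul_eq_mul]; ring⟩
  refine convexHull_min ?_ ((convex_halfSpace_ge hlin 2).inter (convex_halfSpace_le hlin 6))
  rintro x (rfl | rfl | rfl | rfl) <;> norm_num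

/-- Every future-directed timelike curve contained in the quadrilateral `Q` has
Lorentzian length at most `√2`. -/
theorem stmt_11 (p q : ℝ × ℝ) (γ : ℝ → ℝ × ℝ)
    (h : IsTimelikeCurveIn Qquad γ p q) : Llen γ ≤ Real.sqrt 2 := by
  set u : ℝ × ℝ := (Real.sqrt 2 / 4, 3 * Real.sqrt 2 / 4)
  have hsq : Real.sqrt 2 ^ 2 = 2 := Real.sq_sqrt zero_le_two
  have hu : minkowskiInner u u = 1 := by simp only [minkowskiInner, u]; nlinarith
  have hu₂ : 0 < u.2 := by positivity
  have hp : 2 ≤ 3 * p.2 - p.1 := (Qquad_subset_strip (h.1 ▸ h.2.2.1 0 ⟨le_rfl, zero_le_one⟩)).1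
  have hq : 3 * q.2 - q.1 ≤ 6 := (Qquad_subset_strip (h.2.1 ▸ h.2.2.1 1 ⟨zero_le_one, le_rfl⟩)).2
  calc Llen γ ≤ minkowskiInner u q - minkowskiInner u p := Llen_le_minkowskiInner_sub h hu hu₂
    _ = Real.sqrt 2 / 4 * ((3 * q.2 - q.1) - (3 * p.2 - p.1)) := by
        simp only [minkowskiInner, u]; ring
    _ ≤ Real.sqrt 2 / 4 * 4 := by gcongr; linarith
    _ = Real.sqrt 2 := by ring
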